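/- arXiv:1702.01273 — 2 statements merged into one kernel-verified Lean document; each statement's English description precedes it below -/
import Mathlib

section
/- Let f_0(1)=1 and f_0(n)=0 for n>1, and let f_m be the m-th invert transform of f_0. Then for all m ≥ 1 and all 1 ≤ k ≤ n, the array c_m satisfies c_m(n,k) = Σ_{i=k}^{n} (m-1)^{i-k} · C(i-1, k-1) · c_1(n,i), where c_1(n,n)=1 and c_1(n,k)=0 for k<n, so in particular c_2(n,k) = C(n-1, k-1). -/
/-!
Since `f₀ i = 0 ^ (i - 1)` for `i ≥ 1`, and the invert transform turns `i ↦ t ^ (i - 1)` into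
`i ↦ (t + 1) ^ (i - 1)` (a geometric sum), we get `f_{m-1} i = (m - 1) ^ (i - 1)`. For such a
geometric sequence every composition of `n` into `k` parts contributes `t ^ (n - k)`, and by stars
and bars there are `C(n - 1, k - 1)` of them. Hence `c_m(n, k) = (m - 1) ^ (n - k) * C(n - 1, k - 1)`;
in particular `c_1(n, i)` vanishes unless `i = n`, and the sum collapses to its last term.
-/

/-- The invert transform: `invT g n = g n + ∑_{j=1}^{n-1} g j * invT g (n-j)`. -/
def invT (g : ℕ → ℤ) : ℕ → ℤ
  | n => g n + ∑ j ∈ (Finset.Ico 1 n).attach, g j.1 * invT g (n - j.1)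
decreasing_by
  have h := Finset.mem_Ico.mp j.2
  omega

/-- Compositions of `n` into `k` positive parts. -/
def comps (k n : ℕ) : Finset (Fin k → ℕ) :=
  (Finset.Nat.antidiagonalTuple k n).filter fun f => ∀ i, 0 < f i

/-- The `k`-fold convolution array of `g`:
sum over compositions of `n` into `k` positive parts of the products of values of `g`. -/
def compArr (g : ℕ → ℤ) (n k : ℕ) : ℤ :=
  ∑ f ∈ comps k n, ∏ i, g (f i)

open Finset

lemma mem_comps {k n : ℕ} {f : Fin k → ℕ} :
    f ∈ comps k n ↔ ∑ i, f i = n ∧ ∀ i, 0 < f i := by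
  simp [comps, Finset.Nat.mem_antidiagonalTuple]

lemma Finset.Nat.card_antidiagonalTuple (k n : ℕ) :
    #(Finset.Nat.antidiagonalTuple k n) = (k + n - 1).choose n := by
  rw [card_eq_of_equiv_fintype ((Equiv.subtypeEquivRight fun _ ↦
    Finset.Nat.mem_antidiagonalTuple).trans (Sym.equivNatSumOfFintype (Fin k) n).symm),
    Sym.card_sym_eq_choose, Fintype.card_fin]

lemma sum_sub_one_of_mem_comps {k n : ℕ} {f : Fin k → ℕ} (hf : f ∈ comps k n) :
    ∑ i, (f i - 1) = n - k := by
  obtain ⟨hsum, hpos⟩ := mem_comps.mp hf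
  have : ∑ i, (f i - 1 + 1) = n := hsum ▸ sum_congr rfl fun i _ ↦ Nat.sub_add_cancel (hpos i)
  simp only [sum_add_distrib, sum_const, card_univ, Fintype.card_fin, smul_eq_mul,
    mul_one] at this
  omega

lemma card_comps {k n : ℕ} (hk : 1 ≤ k) (hkn : k ≤ n) :
    #(comps k n) = (n - 1).choose (k - 1) := by
  have hcard : #(comps k n) = #(Finset.Nat.antidiagonalTuple k (n - k)) := by
    refine card_nbij' (fun f i ↦ f i - 1) (fun g i ↦ g i + 1) ?_ ?_ ?_ ?_
    · intro f hf
      simpa [Finset.Nat.mem_antidiagonalTuple] using sum_sub_one_of_mem_comps hf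
    · intro g hg
      simp only [mem_coe, Finset.Nat.mem_antidiagonalTuple] at hg
      refine mem_comps.mpr ⟨?_, fun i ↦ Nat.succ_pos _⟩
      rw [sum_add_distrib, hg, sum_const, card_univ, Fintype.card_fin, smul_eq_mul, mul_one]
      omega
    · intro f hf
      funext i
      exact Nat.sub_add_cancel ((mem_comps.mp hf).2 i)
    · intro g _
      funext i
      simp
  rw [hcard, Finset.Nat.card_antidiagonalTuple, show k + (n - k) - 1 = n - 1 by omega,
    ← Nat.choose_symm (by omega : n - k ≤ n - 1), show n - 1 - (n - k) = k - 1 by omega]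

lemma compArr_eq_pow_mul_choose {g : ℕ → ℤ} {t : ℤ} (hg : ∀ i, 1 ≤ i → g i = t ^ (i - 1))
    {n k : ℕ} (hk : 1 ≤ k) (hkn : k ≤ n) :
    compArr g n k = t ^ (n - k) * (n - 1).choose (k - 1) := by
  have hprod : ∀ f ∈ comps k n, ∏ i, g (f i) = t ^ (n - k) := by
    intro f hf
    rw [← sum_sub_one_of_mem_comps hf, ← prod_pow_eq_pow_sum]
    exact prod_congr rfl fun i _ ↦ hg _ ((mem_comps.mp hf).2 i)
  rw [compArr, sum_congr rfl hprod, sum_const, card_comps hk hkn, nsmul_eq_mul, mul_comm]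

lemma invT_eq_pow {g : ℕ → ℤ} {t : ℤ} (hg : ∀ i, 1 ≤ i → g i = t ^ (i - 1)) :
    ∀ n, 1 ≤ n → invT g n = (t + 1) ^ (n - 1) := by
  intro n
  induction n using Nat.strong_induction_on with
  | _ n ih =>
    intro hn
    have hterm : ∀ j ∈ Ico 1 n,
        g j * invT g (n - j) = t ^ (j - 1) * (t + 1) ^ (n - 1 - 1 - (j - 1)) := by
      intro j hj
      obtain ⟨hj1, hjn⟩ := mem_Ico.mp hj
      rw [hg j hj1, ih (n - j) (by omega) (by omega)]
      congr 2
      omega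
    have hgeom := geom_sum₂_mul t (t + 1) (n - 1)
    rw [invT, sum_attach (Ico 1 n) fun j ↦ g j * invT g (n - j), sum_congr rfl hterm, hg n hn,
      sum_Ico_eq_sum_range]
    simp only [add_tsub_cancel_left]
    linear_combination -hgeom

lemma iterate_invT_eq_pow {g : ℕ → ℤ} {t : ℤ} (hg : ∀ i, 1 ≤ i → g i = t ^ (i - 1)) (m : ℕ) :
    ∀ i, 1 ≤ i → invT^[m] g i = (t + m) ^ (i - 1) := by
  induction m with
  | zero => simpa using hg
  | succ m ih =>
    intro i hi
    rw [Function.iterate_succ_apply', invT_eq_pow ih i hi, Nat.cast_succ, add_assoc]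

theorem stmt5 (m n k : ℕ) (hm : 1 ≤ m) (hk : 1 ≤ k) (hkn : k ≤ n)
    (f0 : ℕ → ℤ) (hf0 : f0 1 = 1 ∧ ∀ i > 1, f0 i = 0) :
    compArr f0 n n = 1 ∧
    (k < n → compArr f0 n k = 0) ∧
    compArr (invT^[m - 1] f0) n k =
      ∑ i ∈ Finset.Icc k n, ((m : ℤ) - 1) ^ (i - k) * ((i - 1).choose (k - 1)) * compArr f0 n i ∧
    compArr (invT f0) n k = ((n - 1).choose (k - 1) : ℤ) := by
  have hf0_eq_pow : ∀ i, 1 ≤ i → f0 i = (0 : ℤ) ^ (i - 1) := by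
    intro i hi
    rcases hi.eq_or_lt with rfl | hi
    · simpa using hf0.1
    · rw [hf0.2 i hi, zero_pow (by omega)]
  have hc1_diag : compArr f0 n n = 1 := by
    simp [compArr_eq_pow_mul_choose hf0_eq_pow (hk.trans hkn) le_rfl]
  have hc1_lt : ∀ i, 1 ≤ i → i < n → compArr f0 n i = 0 := fun i hi hin ↦ by
    rw [compArr_eq_pow_mul_choose hf0_eq_pow hi hin.le, zero_pow (by omega), zero_mul]
  have hfm (m : ℕ) : ∀ i, 1 ≤ i → invT^[m] f0 i = (m : ℤ) ^ (i - 1) := by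
    simpa using iterate_invT_eq_pow hf0_eq_pow m
  refine ⟨hc1_diag, hc1_lt k hk, ?_, ?_⟩
  · rw [compArr_eq_pow_mul_choose (hfm (m - 1)) hk hkn, Nat.cast_sub hm, Nat.cast_one,
      sum_eq_single_of_mem n (mem_Icc.mpr ⟨hkn, le_rfl⟩), hc1_diag, mul_one]
    intro i hi hin
    obtain ⟨hki, hin'⟩ := mem_Icc.mp hi
    rw [hc1_lt i (hk.trans hki) (hin'.lt_of_ne hin), mul_zero]
  · simpa using compArr_eq_pow_mul_choose (hfm 1) hk hkn
end

section
/- Let g : ℕ+ → ℤ, and let c be the k-fold convolution array of g. If h_m denotes the m-th iterated invert transform of g, then for all n ≥ 1, h_m(n) = Σ_{i=1}^{n} m^{i-1} · c(n,i). -/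
open PowerSeries Finset

def ps (g : ℕ → ℤ) : PowerSeries ℤ := PowerSeries.mk fun n => if n = 0 then 0 else g n

lemma coeff_ps (g : ℕ → ℤ) (n : ℕ) : (coeff n) (ps g) = if n = 0 then 0 else g n := coeff_mk _ _

lemma constantCoeff_ps (g : ℕ → ℤ) : constantCoeff (ps g) = 0 := by
  rw [← coeff_zero_eq_constantCoeff, coeff_ps]; simp

lemma compArr_zero (g : ℕ → ℤ) (n : ℕ) : compArr g n 0 = if n = 0 then 1 else 0 := by
  cases n with
  | zero => simp [compArr, comps]
  | succ k => simp [compArr, comps]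

lemma compArr_succ (g : ℕ → ℤ) (n k : ℕ) :
    compArr g n (k + 1) = ∑ pq ∈ Finset.HasAntidiagonal.antidiagonal n,
      (if pq.1 = 0 then 0 else g pq.1) * compArr g pq.2 k := by
  have h1 : ∀ pq : ℕ × ℕ, (if pq.1 = 0 then 0 else g pq.1) * compArr g pq.2 k
      = if pq.1 ≠ 0 then g pq.1 * compArr g pq.2 k else 0 := by
    intro pq; split <;> simp_all
  simp_rw [h1, ← Finset.sum_filter]
  simp only [compArr, Finset.mul_sum]
  rw [Finset.sum_sigma']
  refine Finset.sum_nbij' (fun f => ⟨(f 0, n - f 0), Fin.tail f⟩)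
    (fun x => Fin.cons x.1.1 x.2) ?_ ?_ ?_ ?_ ?_
  · intro f hf
    simp only [comps, Finset.mem_filter, Finset.Nat.mem_antidiagonalTuple] at hf
    obtain ⟨hsum, hpos⟩ := hf
    have h0 : f 0 ≤ n := hsum ▸ Finset.single_le_sum (fun i _ => Nat.zero_le _) (mem_univ 0)
    have htail : ∑ i, Fin.tail f i = n - f 0 := by
      have := Fin.sum_univ_succ f
      simp only [Fin.tail]
      omega
    simp only [Finset.mem_sigma, Finset.mem_filter, Finset.HasAntidiagonal.mem_antidiagonal,
      comps, Finset.Nat.mem_antidiagonalTuple]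
    exact ⟨⟨by omega, by simp [(hpos 0).ne']⟩, htail, fun i => hpos i.succ⟩
  · intro x hx
    simp only [Finset.mem_sigma, Finset.mem_filter, Finset.HasAntidiagonal.mem_antidiagonal,
      comps, Finset.Nat.mem_antidiagonalTuple] at hx
    obtain ⟨⟨hadd, hpos⟩, hsum, hall⟩ := hx
    simp only [comps, Finset.mem_filter, Finset.Nat.mem_antidiagonalTuple]
    constructor
    · rw [Fin.sum_cons, hsum]; omega
    · intro i
      refine Fin.cases ?_ ?_ i
      · simpa using Nat.pos_of_ne_zero hpos
      · intro j; simpa using hall j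
  · intro f hf
    simp only [comps, Finset.mem_filter, Finset.Nat.mem_antidiagonalTuple] at hf
    exact Fin.cons_self_tail f
  · intro x hx
    simp only [Finset.mem_sigma, Finset.mem_filter, Finset.HasAntidiagonal.mem_antidiagonal,
      comps, Finset.Nat.mem_antidiagonalTuple] at hx
    obtain ⟨⟨hadd, hpos⟩, hsum, hall⟩ := hx
    ext : 1
    · simp only [Fin.cons_zero]
      ext <;> omega
    · simp [Fin.tail_cons]
  · intro f hf
    simp only [comps, Finset.mem_filter, Finset.Nat.mem_antidiagonalTuple] at hf
    have h0 : f 0 ≠ 0 := (hf.2 0).ne'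
    rw [Fin.prod_univ_succ]
    simp [h0, Fin.tail]

lemma coeff_ps_pow (g : ℕ → ℤ) (k : ℕ) : ∀ n, (coeff n) (ps g ^ k) = compArr g n k := by
  induction k with
  | zero =>
    intro n
    rw [pow_zero, coeff_one, compArr_zero]
  | succ k ih =>
    intro n
    rw [pow_succ', coeff_mul, compArr_succ]
    refine Finset.sum_congr rfl fun pq _ => ?_
    rw [coeff_ps, ih]

lemma ps_invT (g : ℕ → ℤ) : ps (invT g) = ps g + ps g * ps (invT g) := by
  ext n
  rw [map_add, coeff_mul]
  cases n with
  | zero => simp [coeff_ps]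
  | succ n =>
    rw [coeff_ps, if_neg (Nat.succ_ne_zero n)]
    conv_lhs => rw [invT]
    rw [Finset.sum_attach (Finset.Ico 1 (n+1)) (fun j => g j * invT g (n + 1 - j))]
    rw [coeff_ps, if_neg (Nat.succ_ne_zero n)]
    congr 1
    simp only [coeff_ps]
    rw [Finset.Nat.sum_antidiagonal_eq_sum_range_succ
      (f := fun p q => (if p = 0 then 0 else g p) * (if q = 0 then 0 else invT g q))]
    have hsub : Finset.Ico 1 (n+1) ⊆ Finset.range ((n+1)+1) := fun x hx => by
      simp only [Finset.mem_Ico, Finset.mem_range] at *; omega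
    have hzero : ∀ x ∈ Finset.range ((n+1)+1), x ∉ Finset.Ico 1 (n+1) →
        (if x = 0 then 0 else g x) * (if n+1-x = 0 then (0:ℤ) else invT g (n+1-x)) = 0 := by
      intro x hx hnx
      simp only [Finset.mem_range, Finset.mem_Ico] at hx hnx
      have : x = 0 ∨ n + 1 - x = 0 := by omega
      rcases this with h | h <;> simp [h]
    conv_rhs => rw [← Finset.sum_subset hsub hzero]
    refine Finset.sum_congr rfl fun j hj => ?_
    simp only [Finset.mem_Ico] at hj
    rw [if_neg (by omega), if_neg (by omega)]

lemma ps_iter (g : ℕ → ℤ) (m : ℕ) (hm : 1 ≤ m) :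
    ps (invT^[m] g) = ps g + (m : PowerSeries ℤ) * (ps g * ps (invT^[m] g)) := by
  induction m with
  | zero => omega
  | succ m ih =>
    rcases Nat.eq_or_lt_of_le hm with h | h
    · rw [← h]
      simpa using ps_invT g
    · have hm' : 1 ≤ m := by omega
      have e2 := ih hm'
      rw [Function.iterate_succ_apply']
      have e1 := ps_invT (invT^[m] g)
      set A := ps (invT (invT^[m] g))
      set B := ps (invT^[m] g)
      set G := ps g
      push_cast
      linear_combination (1 + A) * e2 + (1 - (m : PowerSeries ℤ) * G) * e1

theorem stmt6 (g : ℕ → ℤ) (m n : ℕ) (hm : 1 ≤ m) (hn : 1 ≤ n) :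
    (invT^[m] g) n = ∑ i ∈ Finset.Icc 1 n, (m : ℤ) ^ (i - 1) * compArr g n i := by
  set G := ps g with hG
  set H := ps (invT^[m] g) with hH
  set M := (m : PowerSeries ℤ) * G with hM
  have key : H = G + M * H := by rw [hM, mul_assoc]; exact ps_iter g m hm
  have gs : (∑ i ∈ Finset.range n, M ^ i) * (M - 1) = M ^ n - 1 := geom_sum_mul M n
  have main : H = G * (∑ i ∈ Finset.range n, M ^ i) + H * M ^ n := by
    linear_combination (∑ i ∈ Finset.range n, M ^ i) * key + H * gs
  have hHn : (coeff n) H = invT^[m] g n := by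
    rw [hH, coeff_ps, if_neg (by omega)]
  have hvanish : (coeff n) (H * M ^ n) = 0 := by
    have h1 : (X : PowerSeries ℤ) ∣ H := X_dvd_iff.mpr (constantCoeff_ps _)
    have h2 : (X : PowerSeries ℤ) ∣ M := by
      rw [X_dvd_iff, hM, map_mul, constantCoeff_ps]; ring
    have h3 : (X : PowerSeries ℤ) ^ (n + 1) ∣ H * M ^ n := by
      rw [pow_succ']
      exact mul_dvd_mul h1 (pow_dvd_pow_of_dvd h2 n)
    exact X_pow_dvd_iff.mp h3 n (by omega)
  have hsum : (coeff n) (G * ∑ i ∈ Finset.range n, M ^ i)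
      = ∑ i ∈ Finset.range n, (m : ℤ) ^ i * compArr g n (i + 1) := by
    rw [Finset.mul_sum, map_sum]
    refine Finset.sum_congr rfl fun i _ => ?_
    have : G * M ^ i = ((m : ℤ) ^ i : ℤ) • (G ^ (i + 1)) := by
      rw [hM, mul_pow, zsmul_eq_mul]
      push_cast
      ring
    rw [this, map_zsmul, coeff_ps_pow, smul_eq_mul]
  have := congrArg (coeff n) main
  rw [map_add, hHn, hvanish, add_zero, hsum] at this
  rw [this]
  refine Finset.sum_nbij' (fun i => i + 1) (fun i => i - 1) ?_ ?_ ?_ ?_ ?_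
  · intro a ha; simp only [Finset.mem_range] at ha; simp only [Finset.mem_Icc]; omega
  · intro a ha; simp only [Finset.mem_Icc] at ha; simp only [Finset.mem_range]; omega
  · intro a ha; simp
  · intro a ha; simp only [Finset.mem_Icc] at ha; omega
  · intro a ha; simp
end
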